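/- The integral operator T on ℝ² with kernel K(x,y) = (|y|² − |x|²) / (|x−y|^{2+α} (1+|x|²)^{1−β/2} (1+|y|²)) is bounded on L²(ℝ²) for every α ∈ (0,1) and 0 ≤ β < 1+α. -/

import Mathlib

/-!
Schur's test with the weight `w(z) = (1 + |z|)⁻¹`: if `∫ |K(x,y)| w(y) dy ≤ Λ w(x)` and
`∫ |K(x,y)| w(x) dx ≤ Λ w(y)`, then Cauchy–Schwarz against `w` and Tonelli bound `T` on `L²`
by `Λ`. Some weight is needed: for `|x| ≫ |y|` the kernel has size `|x|^(β-2-α)`, which is not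
integrable in `x` over `ℝ²` once `β ≥ α`.

Since `||y|² − |x|²| ≤ |x − y| (|x| + |y|)` and `1 + s² ≥ (1 + s)²/2`, the kernel is dominated by
`(|x| + |y|) |x − y|^(-1-α) (1 + |x|)^(β-2) (1 + |y|)^(-2)`. Each weighted integral of this
majorant is split at `|x − y| = (1 + |c|)/2`, `c` being the point held fixed. Near the diagonal
`1 + |x|` and `1 + |y|` are comparable, and by scaling
`∫_{|z|<R} |z|^(-1-α) dz = R^(1-α) ∫_{|z|<1} |z|^(-1-α) dz`. Away from it `|x − y|` dominates
`1 + |x|`, `1 + |y|` and `|x| + |y|`, which leaves `(1 + |c|)⁻¹` times an integrable power of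
`1 + |z|`. Both parts are `≲ w(c)` because `β < 1 + α`.
-/

open MeasureTheory
open scoped ENNReal

noncomputable section

abbrev E2 := EuclideanSpace ℝ (Fin 2)

/-- The kernel `K(x,y) = (|y|²−|x|²)/(|x−y|^{2+α} (1+|x|²)^{1−β/2} (1+|y|²))`. -/
def Kker (α β : ℝ) (x y : E2) : ℝ :=
  (‖y‖ ^ 2 - ‖x‖ ^ 2) /
    (‖x - y‖ ^ (2 + α) * (1 + ‖x‖ ^ 2) ^ (1 - β / 2) * (1 + ‖y‖ ^ 2))

open Metric Module

section Schur

variable {X Y : Type*} [MeasurableSpace X] [MeasurableSpace Y] {μ : Measure X} {ν : Measure Y}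

theorem eLpNorm_two_sq (f : X → ℝ≥0∞) : eLpNorm f 2 μ ^ 2 = ∫⁻ x, f x ^ 2 ∂μ := by
  simpa using eLpNorm_nnreal_pow_eq_lintegral (f := f) (μ := μ) (p := 2) two_ne_zero

variable [SFinite μ] [SFinite ν] {K : X → Y → ℝ≥0∞} {p : X → ℝ≥0∞} {q : Y → ℝ≥0∞}

theorem lintegral_sq_lintegral_mul_le (hK : Measurable (Function.uncurry K))
    (hp : Measurable p) (hq : Measurable q) (hq0 : ∀ y, q y ≠ 0) (hq_top : ∀ y, q y ≠ ∞)
    {A B : ℝ≥0∞} (hA : ∀ x, ∫⁻ y, K x y * q y ∂ν ≤ A * p x)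
    (hB : ∀ y, ∫⁻ x, K x y * p x ∂μ ≤ B * q y) {f : Y → ℝ≥0∞} (hf : AEMeasurable f ν) :
    ∫⁻ x, (∫⁻ y, K x y * f y ∂ν) ^ 2 ∂μ ≤ A * B * ∫⁻ y, f y ^ 2 ∂ν := by
  set g : Y → ℝ≥0∞ := fun y => (q y)⁻¹ * f y ^ 2
  have hg : AEMeasurable g ν := hq.inv.aemeasurable.mul (hf.pow_const 2)
  have cauchy_schwarz (x : X) :
      (∫⁻ y, K x y * f y ∂ν) ^ 2 ≤ (∫⁻ y, K x y * q y ∂ν) * ∫⁻ y, K x y * g y ∂ν := by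
    have hKx : Measurable (K x) := hK.comp measurable_prodMk_left
    have hsplit (y : Y) :
        K x y * f y = (K x y * q y) ^ (2⁻¹ : ℝ) * (K x y * g y) ^ (2⁻¹ : ℝ) := by
      rw [← ENNReal.mul_rpow_of_nonneg _ _ (by norm_num),
        ← ENNReal.pow_rpow_inv_natCast two_ne_zero (K x y * f y), Nat.cast_ofNat]
      congr 1
      rw [show K x y * q y * (K x y * g y) = (K x y * f y) ^ 2 * (q y * (q y)⁻¹) by ring,
        ENNReal.mul_inv_cancel (hq0 y) (hq_top y), mul_one]
    have h := ENNReal.lintegral_mul_norm_pow_le (hKx.mul hq).aemeasurable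
      (hKx.aemeasurable.mul hg) (by norm_num : (0 : ℝ) ≤ 2⁻¹) (by norm_num : (0 : ℝ) ≤ 2⁻¹)
      (by norm_num)
    simp only [Pi.mul_apply, ← hsplit] at h
    calc (∫⁻ y, K x y * f y ∂ν) ^ 2
        ≤ ((∫⁻ y, K x y * q y ∂ν) ^ (2⁻¹ : ℝ) * (∫⁻ y, K x y * g y ∂ν) ^ (2⁻¹ : ℝ)) ^ 2 := by
          gcongr
      _ = _ := by
          simp only [mul_pow, ← ENNReal.rpow_natCast, ← ENNReal.rpow_mul]
          norm_num
  have hmeas : AEMeasurable (Function.uncurry fun x y => p x * (K x y * g y)) (μ.prod ν) :=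
    (hp.comp measurable_fst).aemeasurable.mul (hK.aemeasurable.mul hg.comp_snd)
  calc ∫⁻ x, (∫⁻ y, K x y * f y ∂ν) ^ 2 ∂μ
      ≤ ∫⁻ x, A * (p x * ∫⁻ y, K x y * g y ∂ν) ∂μ := by
        refine lintegral_mono fun x => (cauchy_schwarz x).trans ?_
        rw [← mul_assoc]
        gcongr
        exact hA x
    _ = A * ∫⁻ x, ∫⁻ y, p x * (K x y * g y) ∂ν ∂μ := by
        have hKx (x : X) : AEMeasurable (fun y => K x y * g y) ν :=
          (hK.comp measurable_prodMk_left).aemeasurable.mul hg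
        simp_rw [← lintegral_const_mul'' _ (hKx _)]
        exact lintegral_const_mul'' _ hmeas.lintegral_prod_right'
    _ = A * ∫⁻ y, (∫⁻ x, K x y * p x ∂μ) * g y ∂ν := by
        rw [lintegral_lintegral_swap hmeas]
        congr 1
        refine lintegral_congr fun y => ?_
        have hKy : AEMeasurable (fun x => K x y * p x) μ :=
          (hK.comp measurable_prodMk_right).aemeasurable.mul hp.aemeasurable
        rw [← lintegral_mul_const'' _ hKy]
        simp only [mul_assoc, mul_left_comm]
    _ ≤ A * ∫⁻ y, B * q y * g y ∂ν := by gcongr with y; exact hB y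
    _ = A * B * ∫⁻ y, f y ^ 2 ∂ν := by
        simp_rw [g, mul_assoc, ← mul_assoc (q _), ENNReal.mul_inv_cancel (hq0 _) (hq_top _),
          one_mul]
        rw [lintegral_const_mul'' _ (hf.pow_const 2)]

theorem eLpNorm_lintegral_mul_le (hK : Measurable (Function.uncurry K))
    (hp : Measurable p) (hq : Measurable q) (hq0 : ∀ y, q y ≠ 0) (hq_top : ∀ y, q y ≠ ∞)
    {Λ : ℝ≥0∞} (hA : ∀ x, ∫⁻ y, K x y * q y ∂ν ≤ Λ * p x)
    (hB : ∀ y, ∫⁻ x, K x y * p x ∂μ ≤ Λ * q y) {f : Y → ℝ≥0∞} (hf : AEMeasurable f ν) :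
    eLpNorm (fun x => ∫⁻ y, K x y * f y ∂ν) 2 μ ≤ Λ * eLpNorm f 2 ν := by
  rw [← ENNReal.pow_le_pow_left_iff two_ne_zero, mul_pow, eLpNorm_two_sq, eLpNorm_two_sq, sq]
  exact lintegral_sq_lintegral_mul_le hK hp hq hq0 hq_top hA hB hf

end Schur

section NearFar

variable {E : Type*} [NormedAddCommGroup E] [NormedSpace ℝ E] [FiniteDimensional ℝ E]
  [MeasurableSpace E] [BorelSpace E] (μ : Measure E) [μ.IsAddHaarMeasure]

theorem lintegral_comp_smul_of_pos (f : E → ℝ≥0∞) {r : ℝ} (hr : 0 < r) :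
    ∫⁻ x, f (r • x) ∂μ = ENNReal.ofReal ((r ^ finrank ℝ E)⁻¹) * ∫⁻ x, f x ∂μ := by
  have h := lintegral_map_equiv f (MeasurableEquiv.smul₀ r hr.ne' : E ≃ᵐ E) (μ := μ)
  rw [MeasurableEquiv.coe_smul₀, Measure.map_addHaar_smul μ hr.ne', lintegral_smul_measure,
    abs_of_pos (by positivity)] at h
  exact h.symm

theorem lintegral_ball_norm_sub_rpow_neg (c : E) (p : ℝ) {r : ℝ} (hr : 0 < r) :
    ∫⁻ z in ball c r, ENNReal.ofReal (‖z - c‖ ^ (-p)) ∂μ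
      = ENNReal.ofReal (r ^ ((finrank ℝ E : ℝ) - p))
          * ∫⁻ z in ball 0 1, ENNReal.ofReal (‖z‖ ^ (-p)) ∂μ := by
  set G : E → ℝ≥0∞ := (ball (0 : E) r).indicator fun z => ENNReal.ofReal (‖z‖ ^ (-p))
  have htranslate : ∫⁻ z in ball c r, ENNReal.ofReal (‖z - c‖ ^ (-p)) ∂μ = ∫⁻ z, G z ∂μ := by
    rw [← lintegral_indicator measurableSet_ball, ← lintegral_sub_right_eq_self G c]
    congr with z
    simp [G, Set.indicator, dist_eq_norm]
  have hscale : ∫⁻ w, G (r • w) ∂μ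
      = ENNReal.ofReal (r ^ (-p)) * ∫⁻ w in ball 0 1, ENNReal.ofReal (‖w‖ ^ (-p)) ∂μ := by
    rw [← lintegral_const_mul' _ _ ENNReal.ofReal_ne_top, ← lintegral_indicator measurableSet_ball]
    congr with w
    simp [G, Set.indicator, norm_smul, abs_of_pos hr, Real.mul_rpow hr.le (norm_nonneg w), hr,
      ENNReal.ofReal_mul (Real.rpow_nonneg hr.le _)]
  have hrd : ENNReal.ofReal (r ^ finrank ℝ E) * ENNReal.ofReal ((r ^ finrank ℝ E)⁻¹) = 1 := by
    rw [← ENNReal.ofReal_mul (by positivity), mul_inv_cancel₀ (by positivity), ENNReal.ofReal_one]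
  calc ∫⁻ z in ball c r, ENNReal.ofReal (‖z - c‖ ^ (-p)) ∂μ
      = ENNReal.ofReal (r ^ finrank ℝ E) * ∫⁻ w, G (r • w) ∂μ := by
        rw [htranslate, lintegral_comp_smul_of_pos μ G hr, ← mul_assoc, hrd, one_mul]
    _ = _ := by
        rw [hscale, ← mul_assoc, ← ENNReal.ofReal_mul (by positivity), ← Real.rpow_natCast,
          ← Real.rpow_add hr, sub_eq_add_neg]

theorem lintegral_unitBall_norm_rpow_neg_lt_top [Nontrivial E] {p : ℝ} (hp : p < finrank ℝ E) :
    ∫⁻ z in ball 0 1, ENNReal.ofReal (‖z‖ ^ (-p)) ∂μ < ∞ := by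
  refine IntegrableOn.setLIntegral_lt_top
    (integrableOn_ball_of_norm_le_rpow (C := 1) Module.finrank_pos hp ?_
    (measurable_norm.pow_const _).aestronglyMeasurable)
  filter_upwards with z
  rw [Real.norm_of_nonneg (by positivity), one_mul]

theorem exists_lintegral_le_of_near_far [Nontrivial E] {p t : ℝ} (hp : p < finrank ℝ E)
    (ht : finrank ℝ E < t) :
    ∃ Λ : ℝ≥0∞, Λ ≠ ∞ ∧ ∀ (c : E) (R C₁ C₂ : ℝ) (g : E → ℝ≥0∞), 0 < R → 0 ≤ C₁ → 0 ≤ C₂ →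
      (∀ z, ‖z - c‖ < R → g z ≤ ENNReal.ofReal (C₁ * ‖z - c‖ ^ (-p))) →
      (∀ z, R ≤ ‖z - c‖ → g z ≤ ENNReal.ofReal (C₂ * (1 + ‖z‖) ^ (-t))) →
      ∫⁻ z, g z ∂μ ≤ Λ * ENNReal.ofReal (C₁ * R ^ ((finrank ℝ E : ℝ) - p) + C₂) := by
  set I := ∫⁻ z in ball 0 1, ENNReal.ofReal (‖z‖ ^ (-p)) ∂μ
  set J := ∫⁻ z, ENNReal.ofReal ((1 + ‖z‖) ^ (-t)) ∂μ
  refine ⟨I + J, (ENNReal.add_lt_top.2 ⟨lintegral_unitBall_norm_rpow_neg_lt_top μ hp,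
    finite_integral_one_add_norm ht⟩).ne, fun c R C₁ C₂ g hR hC₁ hC₂ hnear hfar => ?_⟩
  have hinner : ∫⁻ z in ball c R, g z ∂μ ≤ ENNReal.ofReal (C₁ * R ^ ((finrank ℝ E : ℝ) - p)) * I :=
    calc ∫⁻ z in ball c R, g z ∂μ
        ≤ ∫⁻ z in ball c R, ENNReal.ofReal C₁ * ENNReal.ofReal (‖z - c‖ ^ (-p)) ∂μ :=
          setLIntegral_mono' measurableSet_ball fun z hz =>
            (hnear z (mem_ball_iff_norm.1 hz)).trans_eq (ENNReal.ofReal_mul hC₁)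
      _ = _ := by
          rw [lintegral_const_mul' _ _ ENNReal.ofReal_ne_top,
            lintegral_ball_norm_sub_rpow_neg μ c p hR, ← mul_assoc, ← ENNReal.ofReal_mul hC₁]
  have houter : ∫⁻ z in (ball c R)ᶜ, g z ∂μ ≤ ENNReal.ofReal C₂ * J :=
    calc ∫⁻ z in (ball c R)ᶜ, g z ∂μ
        ≤ ∫⁻ z in (ball c R)ᶜ, ENNReal.ofReal C₂ * ENNReal.ofReal ((1 + ‖z‖) ^ (-t)) ∂μ :=
          setLIntegral_mono' measurableSet_ball.compl fun z hz =>
            (hfar z (by simpa [dist_eq_norm] using hz)).trans_eq (ENNReal.ofReal_mul hC₂)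
      _ ≤ ∫⁻ z, ENNReal.ofReal C₂ * ENNReal.ofReal ((1 + ‖z‖) ^ (-t)) ∂μ :=
          setLIntegral_le_lintegral _ _
      _ = _ := lintegral_const_mul' _ _ ENNReal.ofReal_ne_top
  calc ∫⁻ z, g z ∂μ = ∫⁻ z in ball c R, g z ∂μ + ∫⁻ z in (ball c R)ᶜ, g z ∂μ :=
        (lintegral_add_compl g measurableSet_ball).symm
    _ ≤ ENNReal.ofReal (C₁ * R ^ ((finrank ℝ E : ℝ) - p)) * I + ENNReal.ofReal C₂ * J :=
        add_le_add hinner houter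
    _ ≤ (I + J) * ENNReal.ofReal (C₁ * R ^ ((finrank ℝ E : ℝ) - p) + C₂) := by
        rw [ENNReal.ofReal_add (by positivity) hC₂, add_mul, mul_add, mul_add]
        rw [mul_comm I, mul_comm J, mul_comm J]
        exact add_le_add le_self_add le_add_self

end NearFar

theorem one_add_rpow_mul_half_rpow_le {a γ α : ℝ} (ha : 0 ≤ a) (hα : α ≤ 1)
    (hγ : γ + 1 - α ≤ -1) :
    (1 + a) ^ γ * ((1 + a) / 2) ^ (1 - α) ≤ (1 + a)⁻¹ := calc
  (1 + a) ^ γ * ((1 + a) / 2) ^ (1 - α) ≤ (1 + a) ^ γ * (1 + a) ^ (1 - α) := by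
    gcongr
    linarith
  _ ≤ (1 + a)⁻¹ := by
    rw [← Real.rpow_add (by positivity), ← Real.rpow_neg_one]
    exact Real.rpow_le_rpow_of_exponent_le (by linarith) (by linarith)

theorem one_add_sq_rpow_inv_le {a t : ℝ} (ha : 0 ≤ a) (ht : 0 ≤ t) :
    ((1 + a ^ 2) ^ t)⁻¹ ≤ 2 ^ t * (1 + a) ^ (-(2 * t)) := by
  have h : (1 + a) ^ 2 / 2 ≤ 1 + a ^ 2 := by nlinarith [sq_nonneg (1 - a)]
  calc ((1 + a ^ 2) ^ t)⁻¹ ≤ (((1 + a) ^ 2 / 2) ^ t)⁻¹ := by gcongr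
    _ = 2 ^ t * (1 + a) ^ (-(2 * t)) := by
      rw [Real.div_rpow (by positivity) (by norm_num), inv_div, Real.rpow_neg (by positivity),
        ← Real.rpow_natCast, ← Real.rpow_mul (by positivity)]
      push_cast
      ring

def kernelMajorant (α β a b D : ℝ) : ℝ :=
  (a + b) * D ^ (-(1 + α)) * (1 + a) ^ (β - 2) / (1 + b) ^ 2

theorem abs_kker_le_kernelMajorant {α β : ℝ} (hβ : β ≤ 2) (x y : E2) :
    |Kker α β x y| ≤ 2 ^ (2 - β / 2) * kernelMajorant α β ‖x‖ ‖y‖ ‖x - y‖ := by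
  rcases (norm_nonneg (x - y)).eq_or_lt with hD | hD
  · have hxy : x = y := sub_eq_zero.mp (norm_eq_zero.mp hD.symm)
    simp only [Kker, kernelMajorant, hxy, sub_self, zero_div, abs_zero]
    positivity
  have hnum : |‖y‖ ^ 2 - ‖x‖ ^ 2| ≤ ‖x - y‖ * (‖x‖ + ‖y‖) := calc
    |‖y‖ ^ 2 - ‖x‖ ^ 2| = |‖y‖ - ‖x‖| * (‖x‖ + ‖y‖) := by
      rw [sq_sub_sq, abs_mul, abs_of_nonneg (by positivity : 0 ≤ ‖y‖ + ‖x‖)]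
      ring
    _ ≤ ‖x - y‖ * (‖x‖ + ‖y‖) := by
      gcongr
      rw [norm_sub_rev]
      exact abs_norm_sub_norm_le y x
  have hx := one_add_sq_rpow_inv_le (norm_nonneg x) (t := 1 - β / 2) (by linarith)
  have hy : (1 + ‖y‖ ^ 2)⁻¹ ≤ 2 / (1 + ‖y‖) ^ 2 := by
    rw [inv_eq_one_div, div_le_div_iff₀ (by positivity) (by positivity)]
    nlinarith [sq_nonneg (1 - ‖y‖)]
  have hDpow : ‖x - y‖ / ‖x - y‖ ^ (2 + α) = ‖x - y‖ ^ (-(1 + α)) := by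
    rw [show -(1 + α) = 1 - (2 + α) by ring, Real.rpow_sub hD, Real.rpow_one]
  have hden : 0 < ‖x - y‖ ^ (2 + α) * (1 + ‖x‖ ^ 2) ^ (1 - β / 2) * (1 + ‖y‖ ^ 2) := by
    have := Real.rpow_pos_of_pos hD (2 + α)
    positivity
  rw [Kker, abs_div, abs_of_pos hden]
  calc |‖y‖ ^ 2 - ‖x‖ ^ 2| / (‖x - y‖ ^ (2 + α) * (1 + ‖x‖ ^ 2) ^ (1 - β / 2) * (1 + ‖y‖ ^ 2))
      ≤ ‖x - y‖ * (‖x‖ + ‖y‖) /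
          (‖x - y‖ ^ (2 + α) * (1 + ‖x‖ ^ 2) ^ (1 - β / 2) * (1 + ‖y‖ ^ 2)) := by gcongr
    _ = (‖x‖ + ‖y‖) * (‖x - y‖ / ‖x - y‖ ^ (2 + α)) * ((1 + ‖x‖ ^ 2) ^ (1 - β / 2))⁻¹
          * (1 + ‖y‖ ^ 2)⁻¹ := by simp only [div_eq_mul_inv, mul_inv]; ring
    _ ≤ (‖x‖ + ‖y‖) * ‖x - y‖ ^ (-(1 + α)) * (2 ^ (1 - β / 2) * (1 + ‖x‖) ^ (-(2 * (1 - β / 2))))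
          * (2 / (1 + ‖y‖) ^ 2) := by rw [hDpow]; gcongr
    _ = 2 ^ (2 - β / 2) * kernelMajorant α β ‖x‖ ‖y‖ ‖x - y‖ := by
      rw [show 2 - β / 2 = (1 - β / 2) + 1 by ring, Real.rpow_add two_pos, Real.rpow_one,
        kernelMajorant, show -(2 * (1 - β / 2)) = β - 2 by ring]
      ring

theorem kernelMajorant_div_snd_le_near {α β a b D : ℝ} (ha : 0 ≤ a) (hb : 0 ≤ b) (hD0 : 0 ≤ D)
    (hab : a ≤ b + D) (hba : b ≤ a + D) (hD : D < (1 + a) / 2) :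
    kernelMajorant α β a b D / (1 + b) ≤ 24 * (1 + a) ^ (β - 4) * D ^ (-(1 + α)) := by
  have hcompare : (a + b) * (1 + a) ^ 2 ≤ 24 * (1 + b) ^ 3 := calc
    (a + b) * (1 + a) ^ 2 ≤ 3 * (1 + a) * (1 + a) ^ 2 := by gcongr; linarith
    _ = 3 * (1 + a) ^ 3 := by ring
    _ ≤ 3 * (2 * (1 + b)) ^ 3 := by gcongr; linarith
    _ = 24 * (1 + b) ^ 3 := by ring
  have hpow : (1 + a) ^ (β - 4) = (1 + a) ^ (β - 2) / (1 + a) ^ 2 := by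
    rw [← Real.rpow_sub_natCast (by positivity)]
    ring_nf
  calc kernelMajorant α β a b D / (1 + b)
      = D ^ (-(1 + α)) * ((1 + a) ^ (β - 2) / (1 + a) ^ 2)
          * ((a + b) * (1 + a) ^ 2 / (1 + b) ^ 3) := by
        rw [kernelMajorant]
        field_simp
    _ ≤ D ^ (-(1 + α)) * ((1 + a) ^ (β - 2) / (1 + a) ^ 2) * 24 := by
        gcongr
        rwa [div_le_iff₀ (by positivity)]
    _ = 24 * (1 + a) ^ (β - 4) * D ^ (-(1 + α)) := by
        rw [hpow]
        ring

theorem kernelMajorant_div_fst_le_near {α β a b D : ℝ} (hβ : β ≤ 3) (ha : 0 ≤ a) (hb : 0 ≤ b)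
    (hD0 : 0 ≤ D) (hab : a ≤ b + D) (hba : b ≤ a + D) (hD : D < (1 + b) / 2) :
    kernelMajorant α β a b D / (1 + a) ≤ 3 * 2 ^ (3 - β) * (1 + b) ^ (β - 4) * D ^ (-(1 + α)) := by
  have hcompare : (1 + a) ^ (β - 3) ≤ 2 ^ (3 - β) * (1 + b) ^ (β - 3) := calc
    (1 + a) ^ (β - 3) ≤ ((1 + b) / 2) ^ (β - 3) :=
      Real.rpow_le_rpow_of_nonpos (by positivity) (by linarith) (by linarith)
    _ = 2 ^ (3 - β) * (1 + b) ^ (β - 3) := by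
      rw [Real.div_rpow (by positivity) zero_le_two, div_eq_mul_inv, ← Real.rpow_neg zero_le_two]
      ring_nf
  calc kernelMajorant α β a b D / (1 + a)
      = (a + b) * D ^ (-(1 + α)) * (1 + a) ^ (β - 3) / (1 + b) ^ 2 := by
        rw [kernelMajorant, show β - 3 = β - 2 - 1 by ring, Real.rpow_sub_one (by positivity)]
        ring
    _ ≤ (3 * (1 + b)) * D ^ (-(1 + α)) * (2 ^ (3 - β) * (1 + b) ^ (β - 3)) / (1 + b) ^ 2 := by
        gcongr
        linarith
    _ = 3 * 2 ^ (3 - β) * (1 + b) ^ (β - 4) * D ^ (-(1 + α)) := by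
        rw [show β - 4 = β - 3 - 1 by ring, Real.rpow_sub_one (by positivity)]
        field_simp

theorem add_mul_rpow_neg_le {a b D k α : ℝ} (hα : 0 ≤ α) (ha : 0 ≤ a) (hk : 0 < k)
    (hab : a + b ≤ 5 * D) (hD : 1 + a ≤ k * D) :
    (a + b) * D ^ (-(1 + α)) ≤ 5 * k ^ α * (1 + a) ^ (-α) := by
  have hDpos : 0 < D := pos_of_mul_pos_right (by linarith : 0 < k * D) hk.le
  calc (a + b) * D ^ (-(1 + α)) ≤ 5 * D * D ^ (-(1 + α)) := by gcongr
    _ = 5 * D ^ (-α) := by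
      rw [show -(1 + α) = -α - 1 by ring, Real.rpow_sub_one hDpos.ne']
      field_simp
    _ ≤ 5 * ((1 + a) / k) ^ (-α) := by
      have hD' : (1 + a) / k ≤ D := (div_le_iff₀' hk).mpr hD
      exact mul_le_mul_of_nonneg_left
        (Real.rpow_le_rpow_of_nonpos (by positivity) hD' (by linarith)) (by norm_num)
    _ = 5 * k ^ α * (1 + a) ^ (-α) := by
      rw [Real.div_rpow (by positivity) hk.le, Real.rpow_neg hk.le, div_inv_eq_mul]
      ring

theorem kernelMajorant_div_snd_le_far {α β a b D : ℝ} (hα : 0 ≤ α) (hβ : β ≤ 1 + α)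
    (ha : 0 ≤ a) (hb : 0 ≤ b) (hba : b ≤ a + D) (hD : (1 + a) / 2 ≤ D) :
    kernelMajorant α β a b D / (1 + b) ≤ 5 * 2 ^ α * (1 + a)⁻¹ * (1 + b) ^ (-3 : ℝ) := by
  have hsing := add_mul_rpow_neg_le (b := b) hα ha two_pos (by linarith) (by linarith)
  have hdecay : (1 + a) ^ (-α) * (1 + a) ^ (β - 2) ≤ (1 + a)⁻¹ := by
    rw [← Real.rpow_add (by positivity), ← Real.rpow_neg_one]
    exact Real.rpow_le_rpow_of_exponent_le (by linarith) (by linarith)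
  have hb3 : (1 + b) ^ (-3 : ℝ) = ((1 + b) ^ 2 * (1 + b))⁻¹ := by
    rw [Real.rpow_neg (by positivity), ← pow_succ]
    norm_cast
  calc kernelMajorant α β a b D / (1 + b)
      = (a + b) * D ^ (-(1 + α)) * (1 + a) ^ (β - 2) * ((1 + b) ^ 2 * (1 + b))⁻¹ := by
        rw [kernelMajorant, div_div, div_eq_mul_inv]
    _ ≤ 5 * 2 ^ α * ((1 + a) ^ (-α) * (1 + a) ^ (β - 2)) * ((1 + b) ^ 2 * (1 + b))⁻¹ := by
        rw [← mul_assoc]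
        gcongr
    _ ≤ 5 * 2 ^ α * (1 + a)⁻¹ * (1 + b) ^ (-3 : ℝ) := by
        rw [hb3]
        gcongr

theorem kernelMajorant_div_fst_le_far {α β a b D : ℝ} (hα : 0 ≤ α) (ha : 0 ≤ a) (hb : 0 ≤ b)
    (hab : a ≤ b + D) (hD : (1 + b) / 2 ≤ D) :
    kernelMajorant α β a b D / (1 + a) ≤ 5 * 3 ^ α * (1 + b)⁻¹ * (1 + a) ^ (-(3 + α - β)) := by
  have hsing := add_mul_rpow_neg_le (b := b) hα ha three_pos (by linarith) (by linarith)
  have hdecay : (1 + a) ^ (-α) * (1 + a) ^ (β - 2) / (1 + a) = (1 + a) ^ (-(3 + α - β)) := by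
    rw [← Real.rpow_add (by positivity), ← Real.rpow_sub_one (by positivity)]
    ring_nf
  have hb2 : ((1 + b) ^ 2)⁻¹ ≤ (1 + b)⁻¹ := by
    gcongr
    nlinarith
  calc kernelMajorant α β a b D / (1 + a)
      = (a + b) * D ^ (-(1 + α)) * (1 + a) ^ (β - 2) / (1 + a) * ((1 + b) ^ 2)⁻¹ := by
        rw [kernelMajorant]
        ring
    _ ≤ 5 * 3 ^ α * (1 + a) ^ (-α) * (1 + a) ^ (β - 2) / (1 + a) * (1 + b)⁻¹ := by
        gcongr
    _ = 5 * 3 ^ α * (1 + b)⁻¹ * (1 + a) ^ (-(3 + α - β)) := by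
        rw [← hdecay]
        ring

theorem measurable_kker (α β : ℝ) : Measurable (Function.uncurry (Kker α β)) := by
  unfold Function.uncurry Kker
  fun_prop

theorem enorm_kker_mul_le {α β : ℝ} (hβ : β ≤ 2) (x y z : E2) :
    ‖Kker α β x y‖ₑ * ENNReal.ofReal (1 + ‖z‖)⁻¹
      ≤ ENNReal.ofReal (2 ^ (2 - β / 2) * (kernelMajorant α β ‖x‖ ‖y‖ ‖x - y‖ / (1 + ‖z‖))) := by
  rw [Real.enorm_eq_ofReal_abs, ← ENNReal.ofReal_mul (abs_nonneg _), ← mul_div_assoc,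
    div_eq_mul_inv]
  gcongr
  exact abs_kker_le_kernelMajorant hβ x y

theorem exists_lintegral_enorm_kker_mul_weight_le_right {α β : ℝ} (hα : α ∈ Set.Ioo 0 1)
    (hβ : β < 1 + α) :
    ∃ Λ : ℝ≥0∞, Λ ≠ ∞ ∧ ∀ x : E2,
      ∫⁻ y, ‖Kker α β x y‖ₑ * ENNReal.ofReal (1 + ‖y‖)⁻¹ ≤ Λ * ENNReal.ofReal (1 + ‖x‖)⁻¹ := by
  obtain ⟨hα0, hα1⟩ := hα
  obtain ⟨Λ, hΛ, hsplit⟩ := exists_lintegral_le_of_near_far (volume : Measure E2)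
    (p := 1 + α) (t := 3) (by simp only [finrank_euclideanSpace_fin, Nat.cast_ofNat]; linarith)
    (by simp only [finrank_euclideanSpace_fin, Nat.cast_ofNat]; norm_num)
  simp only [finrank_euclideanSpace_fin, Nat.cast_ofNat, show (2 : ℝ) - (1 + α) = 1 - α by ring]
    at hsplit
  set k : ℝ := 2 ^ (2 - β / 2)
  refine ⟨Λ * ENNReal.ofReal (k * (24 + 5 * 2 ^ α)), ENNReal.mul_ne_top hΛ ENNReal.ofReal_ne_top,
    fun x => ?_⟩
  have ha := norm_nonneg x
  calc ∫⁻ y, ‖Kker α β x y‖ₑ * ENNReal.ofReal (1 + ‖y‖)⁻¹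
      ≤ Λ * ENNReal.ofReal (k * 24 * (1 + ‖x‖) ^ (β - 4) * ((1 + ‖x‖) / 2) ^ (1 - α)
          + k * 5 * 2 ^ α * (1 + ‖x‖)⁻¹) := by
        refine hsplit x _ _ _ _ (by positivity) (by positivity) (by positivity) ?_ ?_
        · intro y hy
          rw [norm_sub_rev] at hy ⊢
          refine (enorm_kker_mul_le (by linarith) x y y).trans (ENNReal.ofReal_le_ofReal ?_)
          rw [mul_assoc k, mul_assoc k]
          gcongr
          exact kernelMajorant_div_snd_le_near ha (norm_nonneg y) (norm_nonneg _)
            (norm_le_norm_add_norm_sub' x y) (norm_le_norm_add_norm_sub x y) hy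
        · intro y hy
          rw [norm_sub_rev] at hy
          refine (enorm_kker_mul_le (by linarith) x y y).trans (ENNReal.ofReal_le_ofReal ?_)
          rw [mul_assoc k, mul_assoc k, mul_assoc k]
          gcongr
          exact kernelMajorant_div_snd_le_far hα0.le hβ.le ha (norm_nonneg y)
            (norm_le_norm_add_norm_sub x y) hy
    _ ≤ Λ * ENNReal.ofReal (k * (24 + 5 * 2 ^ α) * (1 + ‖x‖)⁻¹) := by
        gcongr
        have := one_add_rpow_mul_half_rpow_le ha hα1.le (γ := β - 4) (by linarith)
        have hk : 0 ≤ k := by positivity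
        nlinarith
    _ = _ := by rw [ENNReal.ofReal_mul (by positivity), mul_assoc]

theorem exists_lintegral_enorm_kker_mul_weight_le_left {α β : ℝ} (hα : α ∈ Set.Ioo 0 1)
    (hβ : β < 1 + α) :
    ∃ Λ : ℝ≥0∞, Λ ≠ ∞ ∧ ∀ y : E2,
      ∫⁻ x, ‖Kker α β x y‖ₑ * ENNReal.ofReal (1 + ‖x‖)⁻¹ ≤ Λ * ENNReal.ofReal (1 + ‖y‖)⁻¹ := by
  obtain ⟨hα0, hα1⟩ := hα
  obtain ⟨Λ, hΛ, hsplit⟩ := exists_lintegral_le_of_near_far (volume : Measure E2)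
    (p := 1 + α) (t := 3 + α - β)
    (by simp only [finrank_euclideanSpace_fin, Nat.cast_ofNat]; linarith)
    (by simp only [finrank_euclideanSpace_fin, Nat.cast_ofNat]; linarith)
  simp only [finrank_euclideanSpace_fin, Nat.cast_ofNat, show (2 : ℝ) - (1 + α) = 1 - α by ring]
    at hsplit
  set k : ℝ := 2 ^ (2 - β / 2)
  refine ⟨Λ * ENNReal.ofReal (k * (3 * 2 ^ (3 - β) + 5 * 3 ^ α)),
    ENNReal.mul_ne_top hΛ ENNReal.ofReal_ne_top, fun y => ?_⟩
  have hb := norm_nonneg y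
  calc ∫⁻ x, ‖Kker α β x y‖ₑ * ENNReal.ofReal (1 + ‖x‖)⁻¹
      ≤ Λ * ENNReal.ofReal (k * (3 * 2 ^ (3 - β)) * (1 + ‖y‖) ^ (β - 4) * ((1 + ‖y‖) / 2) ^ (1 - α)
          + k * (5 * 3 ^ α) * (1 + ‖y‖)⁻¹) := by
        refine hsplit y _ _ _ _ (by positivity) (by positivity) (by positivity) ?_ ?_
        · intro x hx
          refine (enorm_kker_mul_le (by linarith) x y x).trans (ENNReal.ofReal_le_ofReal ?_)
          rw [mul_assoc k, mul_assoc k]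
          gcongr
          exact kernelMajorant_div_fst_le_near (by linarith) (norm_nonneg x) hb (norm_nonneg _)
            (norm_le_norm_add_norm_sub' x y) (norm_le_norm_add_norm_sub x y) hx
        · intro x hx
          refine (enorm_kker_mul_le (by linarith) x y x).trans (ENNReal.ofReal_le_ofReal ?_)
          rw [mul_assoc k, mul_assoc k]
          gcongr
          exact kernelMajorant_div_fst_le_far hα0.le (norm_nonneg x) hb
            (norm_le_norm_add_norm_sub' x y) hx
    _ ≤ Λ * ENNReal.ofReal (k * (3 * 2 ^ (3 - β) + 5 * 3 ^ α) * (1 + ‖y‖)⁻¹) := by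
        gcongr
        have := one_add_rpow_mul_half_rpow_le hb hα1.le (γ := β - 4) (by linarith)
        have hk : 0 ≤ k * (3 * 2 ^ (3 - β)) := by positivity
        nlinarith
    _ = _ := by rw [ENNReal.ofReal_mul (by positivity), mul_assoc]

theorem kernel_operator_L2_bounded_general (α β : ℝ) (hα : α ∈ Set.Ioo (0:ℝ) 1)
    (hβ : β < 1 + α) :
    ∃ C > 0, ∀ f : E2 → ℝ, MemLp f 2 volume →
      eLpNorm (fun x => ∫ y : E2, Kker α β x y * f y) 2 volume ≤
        ENNReal.ofReal C * eLpNorm f 2 volume := by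
  obtain ⟨Λ₁, hΛ₁, hright⟩ := exists_lintegral_enorm_kker_mul_weight_le_right hα hβ
  obtain ⟨Λ₂, hΛ₂, hleft⟩ := exists_lintegral_enorm_kker_mul_weight_le_left hα hβ
  have hw : Measurable fun z : E2 => ENNReal.ofReal (1 + ‖z‖)⁻¹ := by fun_prop
  have hw0 (z : E2) : ENNReal.ofReal (1 + ‖z‖)⁻¹ ≠ 0 := by
    rw [ne_eq, ENNReal.ofReal_eq_zero, not_le]
    positivity
  refine ⟨(max Λ₁ Λ₂).toReal + 1, by positivity, fun f hf => ?_⟩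
  calc eLpNorm (fun x => ∫ y, Kker α β x y * f y) 2 volume
      ≤ eLpNorm (fun x => ∫⁻ y, ‖Kker α β x y‖ₑ * ‖f y‖ₑ) 2 volume :=
        eLpNorm_mono_enorm fun x => by
          simpa only [enorm_mul, enorm_eq_self] using
            enorm_integral_le_lintegral_enorm (fun y => Kker α β x y * f y)
    _ ≤ max Λ₁ Λ₂ * eLpNorm (fun y => ‖f y‖ₑ) 2 volume :=
        eLpNorm_lintegral_mul_le (measurable_kker α β).enorm hw hw hw0
          (fun _ => ENNReal.ofReal_ne_top)
          (fun x => (hright x).trans (by gcongr; exact le_max_left _ _))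
          (fun y => (hleft y).trans (by gcongr; exact le_max_right _ _)) hf.1.enorm
    _ ≤ ENNReal.ofReal ((max Λ₁ Λ₂).toReal + 1) * eLpNorm f 2 volume := by
        rw [eLpNorm_enorm]
        gcongr
        calc max Λ₁ Λ₂ = ENNReal.ofReal (max Λ₁ Λ₂).toReal :=
              (ENNReal.ofReal_toReal (max_ne_top hΛ₁ hΛ₂)).symm
          _ ≤ _ := ENNReal.ofReal_le_ofReal (by linarith)

/-- the integral operator `T f(x) = ∫ K(x,y) f(y) dy` is bounded on `L²(ℝ²)`
for every `α ∈ (0,1)` and `0 ≤ β < 1+α`. -/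
theorem kernel_operator_L2_bounded (α β : ℝ) (hα : α ∈ Set.Ioo (0:ℝ) 1)
    (hβ0 : 0 ≤ β) (hβ : β < 1 + α) :
    ∃ C > 0, ∀ f : E2 → ℝ, MemLp f 2 volume →
      eLpNorm (fun x => ∫ y : E2, Kker α β x y * f y) 2 volume ≤
        ENNReal.ofReal C * eLpNorm f 2 volume :=
  kernel_operator_L2_bounded_general α β hα hβ
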